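/- Let D be an n×n nonnegative real demand matrix, let δ > 0 and s ≥ 1, and consider any schedule of D over s parallel switches with reconfiguration delay δ that covers D. If some row or some column of D has k_i ≥ 1 nonzero entries whose sum is w_i, then the makespan of the schedule is at least w_i/s + δ. -/

import Mathlib

open Finset

/-- A configuration of an optical switch: a permutation of the `n` ports
together with a (time) weight. -/
abbrev Config (n : ℕ) := Equiv.Perm (Fin n) × ℝ

/-- A schedule over `s` parallel switches assigns to each switch a finite
list of configurations. -/
abbrev Schedule (n s : ℕ) := Fin s → List (Config n)

/-- All configuration weights of the schedule are positive. -/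
def ValidWeights {n s : ℕ} (S : Schedule n s) : Prop :=
  ∀ h : Fin s, ∀ c ∈ S h, 0 < c.2

/-- Total weight of all configurations (over all switches) servicing entry `(i, j)`,
i.e. whose permutation maps `i` to `j`. -/
def servedWeight {n s : ℕ} (S : Schedule n s) (i j : Fin n) : ℝ :=
  ∑ h : Fin s, (((S h).filter (fun c => decide (c.1 i = j))).map Prod.snd).sum

/-- The schedule covers the demand matrix `D`. -/
def Covers {n s : ℕ} (D : Matrix (Fin n) (Fin n) ℝ) (S : Schedule n s) : Prop :=
  ∀ i j : Fin n, D i j ≤ servedWeight S i j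

/-- The load of switch `h`: each configuration contributes the reconfiguration
delay `δ` plus its weight. -/
def load {n s : ℕ} (δ : ℝ) (S : Schedule n s) (h : Fin s) : ℝ :=
  ((S h).map (fun c => δ + c.2)).sum

/-- The makespan of the schedule: the maximum load over the switches. -/
noncomputable def makespan {n s : ℕ} (δ : ℝ) (S : Schedule n s) : ℝ :=
  ⨆ h : Fin s, load δ S h


/-!
Every configuration sends row `i` somewhere (and something to column `j`), so the demand of a
line is covered by the total weight of the schedule, which is therefore at least `w > 0`. Hence
some switch is busy and the makespan is at least `δ`; then every switch, empty or not, carries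
weight at most `makespan - δ`, since a nonempty switch pays `δ` at least once. Summing over the
`s` switches gives `w ≤ s (makespan - δ)`.
-/

theorem List.sum_fiberwise_map_filter {α β M : Type*} [Fintype β] [DecidableEq β]
    [AddCommMonoid M] (L : List α) (q : α → β) (g : α → M) :
    ∑ b, ((L.filter fun a => q a = b).map g).sum = (L.map g).sum := by
  induction L with
  | nil => simp
  | cons a L ih =>
    have hsplit : ∀ b, (((a :: L).filter fun a => q a = b).map g).sum
        = (if q a = b then g a else 0) + ((L.filter fun a => q a = b).map g).sum := by
      intro b
      by_cases hb : q a = b <;> simp [hb]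
    simp only [hsplit, sum_add_distrib, ih, sum_ite_eq, mem_univ, if_true, List.map_cons,
      List.sum_cons]

section Schedule

variable {n s : ℕ}

def switchWeight (S : Schedule n s) (h : Fin s) : ℝ :=
  ((S h).map Prod.snd).sum

def totalWeight (S : Schedule n s) : ℝ :=
  ∑ h, switchWeight S h

theorem sum_servedWeight_row (S : Schedule n s) (i : Fin n) :
    ∑ j, servedWeight S i j = totalWeight S := by
  simp only [totalWeight, switchWeight, servedWeight]
  rw [sum_comm]
  exact sum_congr rfl fun h _ => List.sum_fiberwise_map_filter (S h) (fun c => c.1 i) _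

theorem sum_servedWeight_col (S : Schedule n s) (j : Fin n) :
    ∑ i, servedWeight S i j = totalWeight S := by
  simp only [totalWeight, switchWeight, servedWeight]
  rw [sum_comm]
  refine sum_congr rfl fun h _ => ?_
  rw [← List.sum_fiberwise_map_filter (S h) (fun c => c.1.symm j) Prod.snd]
  refine sum_congr rfl fun i _ => ?_
  congr 2
  exact List.filter_congr fun c _ => decide_eq_decide.mpr (c.1.symm_apply_eq.trans eq_comm).symm

theorem Covers.sum_row_le_totalWeight {D : Matrix (Fin n) (Fin n) ℝ} {S : Schedule n s}
    (hcov : Covers D S) (i : Fin n) : ∑ j, D i j ≤ totalWeight S :=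
  sum_servedWeight_row S i ▸ sum_le_sum fun j _ => hcov i j

theorem Covers.sum_col_le_totalWeight {D : Matrix (Fin n) (Fin n) ℝ} {S : Schedule n s}
    (hcov : Covers D S) (j : Fin n) : ∑ i, D i j ≤ totalWeight S :=
  sum_servedWeight_col S j ▸ sum_le_sum fun i _ => hcov i j

theorem load_eq_delta_mul_length_add (δ : ℝ) (S : Schedule n s) (h : Fin s) :
    load δ S h = δ * (S h).length + switchWeight S h := by
  simp only [load, switchWeight, List.sum_map_add, List.map_const', List.sum_replicate,
    nsmul_eq_mul, mul_comm]

theorem load_le_makespan (δ : ℝ) (S : Schedule n s) (h : Fin s) :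
    load δ S h ≤ makespan δ S :=
  le_ciSup (Set.finite_range _).bddAbove h

theorem delta_le_makespan_of_switchWeight_pos {δ : ℝ} (hδ : 0 ≤ δ) {S : Schedule n s}
    {h : Fin s} (hpos : 0 < switchWeight S h) : δ ≤ makespan δ S := by
  have hlen : 1 ≤ (S h).length :=
    List.length_pos_iff.mpr fun hnil => hpos.ne' (by simp [switchWeight, hnil])
  have : δ * 1 ≤ δ * (S h).length := mul_le_mul_of_nonneg_left (by exact_mod_cast hlen) hδ
  linarith [load_eq_delta_mul_length_add δ S h, load_le_makespan δ S h]

theorem switchWeight_le_makespan_sub_delta {δ : ℝ} (hδ : 0 ≤ δ) {S : Schedule n s}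
    (hM : δ ≤ makespan δ S) (h : Fin s) : switchWeight S h ≤ makespan δ S - δ := by
  cases hS : S h with
  | nil => simpa [switchWeight, hS] using hM
  | cons c L =>
    have : δ * 1 ≤ δ * (c :: L).length :=
      mul_le_mul_of_nonneg_left (by simp) hδ
    have hload := load_eq_delta_mul_length_add δ S h ▸ load_le_makespan δ S h
    rw [hS] at hload
    linarith

theorem totalWeight_div_add_le_makespan {δ : ℝ} (hδ : 0 ≤ δ) {S : Schedule n s}
    (hpos : 0 < totalWeight S) : totalWeight S / s + δ ≤ makespan δ S := by
  obtain ⟨h₀, -, hh₀⟩ : ∃ h ∈ univ, (0 : ℝ) < switchWeight S h :=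
    exists_lt_of_sum_lt (by simpa [totalWeight] using hpos)
  have hs : (0 : ℝ) < s := by exact_mod_cast h₀.pos
  have hM := delta_le_makespan_of_switchWeight_pos hδ hh₀
  have : totalWeight S ≤ s * (makespan δ S - δ) := by
    simpa [totalWeight, mul_sub] using
      sum_le_sum fun h (_ : h ∈ univ) => switchWeight_le_makespan_sub_delta hδ hM h
  rw [div_add' _ _ _ hs.ne', div_le_iff₀ hs]
  linarith

end Schedule

theorem sum_filter_ne_zero_pos {ι M : Type*} [Fintype ι] [DecidableEq M] [AddCommMonoid M]
    [PartialOrder M] [IsOrderedCancelAddMonoid M] {f : ι → M} (hf : ∀ i, 0 ≤ f i)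
    (hne : (univ.filter fun i => f i ≠ 0).Nonempty) :
    0 < ∑ i ∈ univ.filter (fun i => f i ≠ 0), f i :=
  sum_pos (fun i hi => (hf i).lt_of_ne (mem_filter.mp hi).2.symm) hne

theorem makespan_ge_avg_weight_add_delta_general {n s : ℕ}
    (D : Matrix (Fin n) (Fin n) ℝ) (hD : ∀ i j, 0 ≤ D i j)
    (δ : ℝ) (hδ : 0 < δ)
    (S : Schedule n s) (hcov : Covers D S)
    (k : ℕ) (hk : 1 ≤ k) (w : ℝ)
    (hrc :
      (∃ i, (univ.filter fun j => D i j ≠ 0).card = k ∧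
        ∑ j ∈ univ.filter (fun j => D i j ≠ 0), D i j = w) ∨
      (∃ j, (univ.filter fun i => D i j ≠ 0).card = k ∧
        ∑ i ∈ univ.filter (fun i => D i j ≠ 0), D i j = w)) :
    w / s + δ ≤ makespan δ S := by
  have hw : 0 < w ∧ w ≤ totalWeight S := by
    rcases hrc with ⟨i, hcard, rfl⟩ | ⟨j, hcard, rfl⟩
    · refine ⟨sum_filter_ne_zero_pos (hD i) (card_pos.mp (by omega)), ?_⟩
      rw [sum_filter_ne_zero]
      exact hcov.sum_row_le_totalWeight i
    · refine ⟨sum_filter_ne_zero_pos (hD · j) (card_pos.mp (by omega)), ?_⟩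
      rw [sum_filter_ne_zero]
      exact hcov.sum_col_le_totalWeight j
  calc w / s + δ ≤ totalWeight S / s + δ := by gcongr; exact hw.2
    _ ≤ makespan δ S := totalWeight_div_add_le_makespan hδ.le (hw.1.trans_le hw.2)

/-- If some row or some column of `D` has `k ≥ 1` nonzero entries whose sum is
`w`, then the makespan of any covering schedule over `s` parallel switches with
reconfiguration delay `δ > 0` is at least `w/s + δ`. -/
theorem makespan_ge_avg_weight_add_delta {n s : ℕ} (hs : 1 ≤ s)
    (D : Matrix (Fin n) (Fin n) ℝ) (hD : ∀ i j, 0 ≤ D i j)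
    (δ : ℝ) (hδ : 0 < δ)
    (S : Schedule n s) (hval : ValidWeights S) (hcov : Covers D S)
    (k : ℕ) (hk : 1 ≤ k) (w : ℝ)
    (hrc :
      (∃ i, (univ.filter fun j => D i j ≠ 0).card = k ∧
        ∑ j ∈ univ.filter (fun j => D i j ≠ 0), D i j = w) ∨
      (∃ j, (univ.filter fun i => D i j ≠ 0).card = k ∧
        ∑ i ∈ univ.filter (fun i => D i j ≠ 0), D i j = w)) :
    w / s + δ ≤ makespan δ S :=
  makespan_ge_avg_weight_add_delta_general D hD δ hδ S hcov k hk w hrc
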